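/- arXiv:2108.06360 — 7 statements merged into one kernel-verified Lean document; each statement's English description precedes it below -/
import Mathlib

section
/- The function ĥ(u) = (1/(u + k₁)) · log((1 + I)/(1 + I·exp(−(u + k₁)))) is strictly positive and strictly decreasing on [0, ∞), and ĥ(u) → 0 as u → ∞. -/
/-!
Write `s = u + k₁` and `g(s) = log((1 + I)/(1 + I e^{-s})) = ∫₀ˢ I e^{-z}/(1 + I e^{-z}) dz`
(`growthIntegral I s`), so that `ĥ(u) = g(s)/s`.
Since `g' = I/(e^s + I)` is strictly decreasing, `g` is strictly concave, and `g 0 = 0`; hence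
`g(s)/s`, the slope of the chord of `g` from the origin, is strictly decreasing in `s > 0`.
Moreover `g > 0` for `s > 0`, and `g(s) → log(1 + I)`, so `g(s)/s → 0`.
-/

open Real Filter Set Topology

/-- The nondimensional light-dependent growth function
`ĥ(u) = (1/(u + k₁)) · log((1 + I)/(1 + I·exp(−(u + k₁))))`. -/
noncomputable def hhat (k₁ I u : ℝ) : ℝ :=
  (1 / (u + k₁)) * Real.log ((1 + I) / (1 + I * Real.exp (-(u + k₁))))

theorem StrictConcaveOn.strictAntiOn_div_self {𝕜 : Type*} [Field 𝕜] [LinearOrder 𝕜]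
    [IsStrictOrderedRing 𝕜] {f : 𝕜 → 𝕜} (hf : StrictConcaveOn 𝕜 (Ici 0) f) (h₀ : f 0 = 0) :
    StrictAntiOn (fun x ↦ f x / x) (Ioi 0) := by
  intro x hx y hy hxy
  have key := hf.secant_strict_mono self_mem_Ici (mem_Ici.2 (le_of_lt hx))
    (mem_Ici.2 (le_of_lt hy)) (ne_of_gt hx) (ne_of_gt hy) hxy
  simpa only [h₀, sub_zero] using key

noncomputable def growthIntegral (I s : ℝ) : ℝ :=
  log ((1 + I) / (1 + I * exp (-s)))

theorem hhat_eq_growthIntegral_div (k₁ I u : ℝ) :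
    hhat k₁ I u = growthIntegral I (u + k₁) / (u + k₁) :=
  one_div_mul_eq_div _ _

section growthIntegral

variable {I : ℝ}

theorem growthIntegral_zero (I : ℝ) : growthIntegral I 0 = 0 := by
  by_cases h : 1 + I = 0 <;> simp [growthIntegral, h]

theorem growthIntegral_pos (hI : 0 < I) {s : ℝ} (hs : 0 < s) : 0 < growthIntegral I s := by
  have hexp : exp (-s) < 1 := exp_lt_one_iff.2 (neg_neg_of_pos hs)
  refine log_pos ((one_lt_div (by positivity)).2 ?_)
  nlinarith

theorem hasDerivAt_growthIntegral (hI : 0 < I) (s : ℝ) :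
    HasDerivAt (growthIntegral I) (I / (exp s + I)) s := by
  have hden : HasDerivAt (fun s ↦ 1 + I * exp (-s)) (-(I * exp (-s))) s := by
    simpa using (((hasDerivAt_neg s).exp).const_mul I).const_add 1
  have hlog := (hden.log (by positivity)).const_sub (log (1 + I))
  have heq : growthIntegral I = fun s ↦ log (1 + I) - log (1 + I * exp (-s)) := by
    funext s
    rw [growthIntegral, log_div (by positivity) (by positivity)]
  rw [heq]
  refine hlog.congr_deriv ?_
  -- multiply numerator and denominator by `e^s`
  have hexp : exp s * exp (-s) = 1 := by rw [← exp_add, add_neg_cancel, exp_zero]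
  rw [neg_div, neg_neg, div_eq_div_iff (by positivity) (by positivity)]
  linear_combination I * hexp

theorem strictConcaveOn_growthIntegral (hI : 0 < I) :
    StrictConcaveOn ℝ univ (growthIntegral I) := by
  have hderiv : deriv (growthIntegral I) = fun s ↦ I / (exp s + I) :=
    funext fun s ↦ (hasDerivAt_growthIntegral hI s).deriv
  refine StrictAnti.strictConcaveOn_univ_of_deriv
    (continuous_iff_continuousAt.2 fun s ↦ (hasDerivAt_growthIntegral hI s).continuousAt) ?_
  rw [hderiv]
  intro a b hab
  exact div_lt_div_of_pos_left hI (by positivity) (by gcongr)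

theorem tendsto_growthIntegral_atTop (hI : 0 < I) :
    Tendsto (growthIntegral I) atTop (𝓝 (log (1 + I))) := by
  have hden : Tendsto (fun s ↦ 1 + I * exp (-s)) atTop (𝓝 1) := by
    simpa using (tendsto_exp_neg_atTop_nhds_zero.const_mul I).const_add 1
  have hlim := ((tendsto_const_nhds (x := 1 + I)).div hden one_ne_zero).log (by positivity)
  rwa [div_one] at hlim

end growthIntegral

/-- `ĥ` is strictly positive and strictly decreasing on `[0, ∞)`, and `ĥ(u) → 0` as `u → ∞`. -/
theorem stmt_0 (k₁ I : ℝ) (hk₁ : 0 < k₁) (hI : 0 < I) :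
    (∀ u ∈ Set.Ici (0 : ℝ), 0 < hhat k₁ I u) ∧
    StrictAntiOn (hhat k₁ I) (Set.Ici (0 : ℝ)) ∧
    Filter.Tendsto (hhat k₁ I) Filter.atTop (nhds 0) := by
  have hshift : MapsTo (· + k₁) (Ici 0) (Ioi 0) := fun u hu ↦ by
    simp only [mem_Ici, mem_Ioi] at hu ⊢; linarith
  have hcomp : hhat k₁ I = (fun s ↦ growthIntegral I s / s) ∘ (· + k₁) :=
    funext (hhat_eq_growthIntegral_div k₁ I)
  refine ⟨fun u hu ↦ ?_, ?_, ?_⟩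
  · rw [hhat_eq_growthIntegral_div]
    exact div_pos (growthIntegral_pos hI (hshift hu)) (hshift hu)
  · have hconc := (strictConcaveOn_growthIntegral hI).subset (subset_univ _) (convex_Ici 0)
    rw [hcomp]
    exact (hconc.strictAntiOn_div_self (growthIntegral_zero I)).comp_strictMonoOn
      ((strictMono_id.add_const k₁).strictMonoOn _) hshift
  · rw [hcomp]
    exact ((tendsto_growthIntegral_atTop hI).div_atTop tendsto_id).comp
      (tendsto_atTop_add_const_right _ k₁ tendsto_id)
end

section
/- For F ∈ [0, 1], the function S(v) = (1 − 1/(γv))·ĥ(G(v)) − β₂, where G(v) = ωκ₂(1 − F)/(β₂λv), is strictly increasing on the interval [1/γ, 1]. -/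
open Set Real

theorem StrictMonoOn.mul_monotoneOn {α M₀ : Type*} [Preorder α] [Mul M₀] [Zero M₀] [Preorder M₀]
    [PosMulMono M₀] [MulPosStrictMono M₀] {f g : α → M₀} {s : Set α} (hf : StrictMonoOn f s)
    (hg : MonotoneOn g s) (hf₀ : ∀ x ∈ s, 0 ≤ f x) (hg₀ : ∀ x ∈ s, 0 < g x) :
    StrictMonoOn (fun x => f x * g x) s := fun a ha b hb hab =>
  (mul_le_mul_of_nonneg_left (hg ha hb hab.le) (hf₀ a ha)).trans_lt
    (mul_lt_mul_of_pos_right (hf ha hb hab) (hg₀ b hb))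

noncomputable def hhatLog (I s : ℝ) : ℝ :=
  log (1 + I) - log (1 + I * exp (-s))

section hhat

variable {k₁ I : ℝ}

theorem hhatLog_zero (I : ℝ) : hhatLog I 0 = 0 := by
  simp [hhatLog]

theorem hhat_eq_hhatLog_div (hI : 0 ≤ I) (u : ℝ) :
    hhat k₁ I u = hhatLog I (u + k₁) / (u + k₁) := by
  rw [hhat, hhatLog, log_div (by positivity) (by positivity)]
  ring

theorem hasDerivAt_hhatLog (hI : 0 ≤ I) (s : ℝ) :
    HasDerivAt (hhatLog I) (I * exp (-s) / (1 + I * exp (-s))) s := by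
  have hexp : HasDerivAt (fun x => 1 + I * exp (-x)) (I * (exp (-s) * -1)) s :=
    (((hasDerivAt_neg s).exp).const_mul I).const_add 1
  exact ((hasDerivAt_const s (log (1 + I))).sub (hexp.log (by positivity))).congr_deriv (by ring)

theorem strictConcaveOn_hhatLog (hI : 0 < I) : StrictConcaveOn ℝ univ (hhatLog I) := by
  refine StrictAnti.strictConcaveOn_univ_of_deriv
    (continuous_iff_continuousAt.2 fun s => (hasDerivAt_hhatLog hI.le s).continuousAt) ?_
  intro s t hst
  simp only [(hasDerivAt_hhatLog hI.le _).deriv]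
  -- `x ↦ x / (1 + x)` is increasing and `I e^{-s}` strictly decreasing
  have hexp : I * exp (-t) < I * exp (-s) := by gcongr
  rw [div_lt_div_iff₀ (by positivity) (by positivity)]
  linarith

theorem strictAntiOn_hhat (hI : 0 < I) : StrictAntiOn (hhat k₁ I) (Ioi (-k₁)) := by
  intro u hu v hv huv
  have hu₀ : 0 < u + k₁ := by linarith [mem_Ioi.1 hu]
  have hv₀ : 0 < v + k₁ := by linarith [mem_Ioi.1 hv]
  have hslope := (strictConcaveOn_hhatLog hI).secant_strict_mono (mem_univ 0) (mem_univ _)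
    (mem_univ _) hu₀.ne' hv₀.ne' (add_lt_add_left huv k₁)
  simpa only [hhat_eq_hhatLog_div hI.le, hhatLog_zero, sub_zero] using hslope

theorem hhat_pos (hI : 0 < I) {u : ℝ} (hu : -k₁ < u) : 0 < hhat k₁ I u := by
  have hu₀ : 0 < u + k₁ := by linarith
  have hexp : exp (-(u + k₁)) < 1 := exp_lt_one_iff.2 (by linarith)
  refine mul_pos (by positivity) (log_pos ((one_lt_div (by positivity)).2 ?_))
  nlinarith

end hhat

/-- `S(v) = (1 − 1/(γv))·ĥ(G(v)) − β₂`, with `G(v) = ωκ₂(1 − F)/(β₂λv)`, is strictly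
increasing on `[1/γ, 1]`. -/
theorem stmt_2 (k₁ I ω κ₂ lam β₂ γ F : ℝ)
    (hk₁ : 0 < k₁) (hI : 0 < I) (hω : 0 < ω) (hκ₂ : 0 < κ₂) (hlam : 0 < lam)
    (hβ₂ : 0 < β₂) (hγ : 1 < γ) (hF : F ∈ Set.Icc (0 : ℝ) 1) :
    StrictMonoOn
      (fun v : ℝ => (1 - 1 / (γ * v)) * hhat k₁ I (ω * κ₂ * (1 - F) / (β₂ * lam * v)) - β₂)
      (Set.Icc (1 / γ) 1) := by
  set G := fun v : ℝ => ω * κ₂ * (1 - F) / (β₂ * lam * v)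
  have hγ₀ : 0 < γ := by linarith
  have hγv : ∀ v ∈ Icc (1 / γ) 1, 1 ≤ γ * v := fun v hv =>
    (div_le_iff₀' hγ₀).1 hv.1
  have hv₀ : ∀ v ∈ Icc (1 / γ) 1, 0 < v := fun v hv =>
    pos_of_mul_pos_right (one_pos.trans_le (hγv v hv)) hγ₀.le
  have hF₁ : 0 ≤ 1 - F := sub_nonneg.2 hF.2
  have hG₀ : ∀ v ∈ Icc (1 / γ) 1, 0 ≤ G v := fun v hv => by have := hv₀ v hv; positivity
  have hG : AntitoneOn G (Icc (1 / γ) 1) := fun a ha b hb hab => by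
    have := hv₀ a ha
    exact div_le_div_of_nonneg_left (by positivity) (by positivity) (by gcongr)
  have hgrowth : MonotoneOn (hhat k₁ I ∘ G) (Icc (1 / γ) 1) :=
    (strictAntiOn_hhat hI).antitoneOn.comp hG fun v hv => by
      simp only [mem_Ioi]; linarith [hG₀ v hv]
  have hfactor : StrictMonoOn (fun v => 1 - 1 / (γ * v)) (Icc (1 / γ) 1) :=
    fun a ha b hb hab => by
      have := hv₀ a ha
      dsimp only
      gcongr
  have hprod := hfactor.mul_monotoneOn hgrowth
    (fun v hv => sub_nonneg.2 ((div_le_one (by linarith [hγv v hv])).2 (hγv v hv)))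
    (fun v hv => hhat_pos hI (by linarith [hG₀ v hv]))
  exact fun a ha b hb hab => sub_lt_sub_right (hprod ha hb hab) β₂
end

section
/- If −1/2 < η̂ < 1/2 + σ̂a₁/(a₂ + 1), then there exists a unique F_h ∈ (0, 1) with J(F_h) = F_h + η̂ − 1/2; moreover G(F) > 0 for all F ∈ [0, F_h) and G(F) < 0 for all F ∈ (F_h, 1]. -/
/-!
Clearing the (positive) denominator of `J`, the equilibrium equation `J(F) = F + η̂ − 1/2`
becomes `q(F) = 0` for a quadratic `q` with `q(0) > 0` (the upper bound on `η̂`) and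
`q(1) = −(η̂ + 1/2) < 0`. A quadratic that is positive at `0` and has two roots `x < y` in
`(0, 1)` is `a (t − x)(t − y)` with `a > 0`, hence positive at `1`; so the root `F_h` given by the
intermediate value theorem is the only one, and `J(F) − (F + η̂ − 1/2)` changes sign exactly there.
This is also the sign of `G` on `[0, 1]`, because the clamp to `[0, 1]` cannot move a value
across `F`.
-/

/-- `J(F) = σ̂·(1 + ξF)·a₁(1 − F)/(a₂(1 − F) + 1)`. -/
noncomputable def Jfun (σ ξ a₁ a₂ F : ℝ) : ℝ :=
  σ * (1 + ξ * F) * (a₁ * (1 - F)) / (a₂ * (1 - F) + 1)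

/-- The right-hand side `G(F) = max{0, min{1, 1/2 − η̂ + J(F)}} − F` of the reduced
single-lake dynamics. -/
noncomputable def Gfun (σ ξ a₁ a₂ η F : ℝ) : ℝ :=
  max 0 (min 1 (1 / 2 - η + Jfun σ ξ a₁ a₂ F)) - F

open Set

theorem IsPreconnected.pos_of_forall_ne_zero {X : Type*} [TopologicalSpace X] {s : Set X}
    (hs : IsPreconnected s) {f : X → ℝ} (hf : ContinuousOn f s) {a : X} (ha : a ∈ s)
    (hfa : 0 < f a) (hz : ∀ z ∈ s, f z ≠ 0) {x : X} (hx : x ∈ s) : 0 < f x := by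
  by_contra! hfx
  obtain ⟨z, hzs, hfz⟩ := hs.intermediate_value hx ha hf ⟨hfx, hfa.le⟩
  exact hz z hzs hfz

theorem IsPreconnected.neg_of_forall_ne_zero {X : Type*} [TopologicalSpace X] {s : Set X}
    (hs : IsPreconnected s) {f : X → ℝ} (hf : ContinuousOn f s) {a : X} (ha : a ∈ s)
    (hfa : f a < 0) (hz : ∀ z ∈ s, f z ≠ 0) {x : X} (hx : x ∈ s) : f x < 0 :=
  neg_pos.1 <| hs.pos_of_forall_ne_zero hf.neg ha (neg_pos.2 hfa)
    (fun z hzs => neg_ne_zero.2 (hz z hzs)) hx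

theorem exists_mem_Ioo_sign_change {f : ℝ → ℝ} {a b : ℝ} (hab : a ≤ b)
    (hf : ContinuousOn f (Icc a b)) (ha : 0 < f a) (hb : f b < 0)
    (huniq : ∀ x ∈ Ioo a b, ∀ y ∈ Ioo a b, f x = 0 → f y = 0 → x = y) :
    ∃ r ∈ Ioo a b, f r = 0 ∧ (∀ x ∈ Ico a r, 0 < f x) ∧ (∀ x ∈ Ioc r b, f x < 0) := by
  obtain ⟨r, hr, hfr⟩ := intermediate_value_Ioo' hab hf ⟨hb, ha⟩
  refine ⟨r, hr, hfr, fun x hx => ?_, fun x hx => ?_⟩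
  · refine isPreconnected_Ico.pos_of_forall_ne_zero
      (hf.mono (Ico_subset_Icc_self.trans (Icc_subset_Icc_right hr.2.le)))
      (left_mem_Ico.2 hr.1) ha (fun z hz hfz => ?_) hx
    have hza : a < z := hz.1.lt_of_ne (by rintro rfl; exact ha.ne' hfz)
    exact hz.2.ne (huniq z ⟨hza, hz.2.trans hr.2⟩ r hr hfz hfr)
  · refine isPreconnected_Ioc.neg_of_forall_ne_zero
      (hf.mono (Ioc_subset_Icc_self.trans (Icc_subset_Icc_left hr.1.le)))
      (right_mem_Ioc.2 hr.2) hb (fun z hz hfz => ?_) hx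
    have hzb : z < b := hz.2.lt_of_ne (by rintro rfl; exact hb.ne hfz)
    exact hz.1.ne' (huniq z ⟨hr.1.trans hz.1, hzb⟩ r hr hfz hfr)

theorem eq_of_quadratic_eq_zero_of_mem_Ioo {a b c x y : ℝ} (hc : 0 < c) (habc : a + b + c < 0)
    (hx : x ∈ Ioo 0 1) (hy : y ∈ Ioo 0 1)
    (hqx : a * x ^ 2 + b * x + c = 0) (hqy : a * y ^ 2 + b * y + c = 0) : x = y := by
  by_contra hne
  have hb : a * (x + y) + b = 0 :=
    mul_left_cancel₀ (sub_ne_zero.2 hne) (by linear_combination hqx - hqy)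
  have hc_eq : c = a * (x * y) := by linear_combination hqx - x * hb
  have ha : 0 < a := pos_of_mul_pos_left (hc_eq ▸ hc) (mul_pos hx.1 hy.1).le
  have h1 : a + b + c = a * ((1 - x) * (1 - y)) := by linear_combination hb + hc_eq
  have : 0 < a * ((1 - x) * (1 - y)) :=
    mul_pos ha (mul_pos (sub_pos.2 hx.2) (sub_pos.2 hy.2))
  linarith

section Lake

variable {σ ξ a₁ a₂ η : ℝ}

theorem Jfun_denom_pos (ha₂ : 0 ≤ a₂) {F : ℝ} (hF : F ≤ 1) : 0 < a₂ * (1 - F) + 1 := by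
  nlinarith

theorem continuousOn_Jfun (ha₂ : 0 ≤ a₂) : ContinuousOn (Jfun σ ξ a₁ a₂) (Icc 0 1) := by
  unfold Jfun
  exact ContinuousOn.div (by fun_prop) (by fun_prop)
    fun F hF => (Jfun_denom_pos ha₂ hF.2).ne'

theorem Jfun_zero : Jfun σ ξ a₁ a₂ 0 = σ * a₁ / (a₂ + 1) := by
  simp [Jfun]

theorem Jfun_one : Jfun σ ξ a₁ a₂ 1 = 0 := by
  simp [Jfun]

theorem eq_of_Jfun_eq (ha₂ : 0 ≤ a₂) (hη₁ : -(1 / 2) < η)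
    (hη₂ : η < 1 / 2 + σ * a₁ / (a₂ + 1)) {x y : ℝ} (hx : x ∈ Ioo 0 1) (hy : y ∈ Ioo 0 1)
    (hJx : Jfun σ ξ a₁ a₂ x = x + η - 1 / 2) (hJy : Jfun σ ξ a₁ a₂ y = y + η - 1 / 2) :
    x = y := by
  have hcleared : ∀ F ≤ 1, Jfun σ ξ a₁ a₂ F = F + η - 1 / 2 →
      (a₂ - σ * a₁ * ξ) * F ^ 2 + (σ * a₁ * (ξ - 1) - (a₂ + 1) + (η - 1 / 2) * a₂) * F
        + (σ * a₁ - (η - 1 / 2) * (a₂ + 1)) = 0 := by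
    intro F hF hJ
    rw [Jfun, div_eq_iff (Jfun_denom_pos ha₂ hF).ne'] at hJ
    linear_combination hJ
  have hc : 0 < σ * a₁ - (η - 1 / 2) * (a₂ + 1) := by
    have := (lt_div_iff₀ (by linarith : (0 : ℝ) < a₂ + 1)).1
      (show η - 1 / 2 < σ * a₁ / (a₂ + 1) by linarith)
    linarith
  exact eq_of_quadratic_eq_zero_of_mem_Ioo hc (by linarith) hx hy
    (hcleared x hx.2.le hJx) (hcleared y hy.2.le hJy)

theorem Gfun_pos_of_lt {F : ℝ} (hF₁ : F < 1)
    (h : F + η - 1 / 2 < Jfun σ ξ a₁ a₂ F) : 0 < Gfun σ ξ a₁ a₂ η F := by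
  have : F < min 1 (1 / 2 - η + Jfun σ ξ a₁ a₂ F) := lt_min hF₁ (by linarith)
  have := this.trans_le (le_max_right 0 _)
  unfold Gfun
  linarith

theorem Gfun_neg_of_lt {F : ℝ} (hF₀ : 0 < F)
    (h : Jfun σ ξ a₁ a₂ F < F + η - 1 / 2) : Gfun σ ξ a₁ a₂ η F < 0 := by
  have : max 0 (min 1 (1 / 2 - η + Jfun σ ξ a₁ a₂ F)) < F :=
    max_lt hF₀ ((min_le_right _ _).trans_lt (by linarith))
  unfold Gfun
  linarith

end Lake

theorem stmt_9_general (σ ξ a₁ a₂ η : ℝ)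
    (ha₂ : 0 < a₂)
    (hη₁ : -(1 / 2) < η) (hη₂ : η < 1 / 2 + σ * a₁ / (a₂ + 1)) :
    ∃ Fh ∈ Set.Ioo (0 : ℝ) 1,
      Jfun σ ξ a₁ a₂ Fh = Fh + η - 1 / 2 ∧
      (∀ F ∈ Set.Ioo (0 : ℝ) 1, Jfun σ ξ a₁ a₂ F = F + η - 1 / 2 → F = Fh) ∧
      (∀ F ∈ Set.Ico (0 : ℝ) Fh, 0 < Gfun σ ξ a₁ a₂ η F) ∧
      (∀ F ∈ Set.Ioc Fh (1 : ℝ), Gfun σ ξ a₁ a₂ η F < 0) := by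
  obtain ⟨Fh, hFh, hroot, hpos, hneg⟩ :=
    exists_mem_Ioo_sign_change (f := fun F => Jfun σ ξ a₁ a₂ F - (F + η - 1 / 2)) zero_le_one
      ((continuousOn_Jfun ha₂.le).sub (by fun_prop))
      (by rw [Jfun_zero]; linarith) (by rw [Jfun_one]; linarith)
      (fun x hx y hy hx0 hy0 =>
        eq_of_Jfun_eq ha₂.le hη₁ hη₂ hx hy (sub_eq_zero.1 hx0) (sub_eq_zero.1 hy0))
  refine ⟨Fh, hFh, sub_eq_zero.1 hroot, fun F hF hJF =>
      eq_of_Jfun_eq ha₂.le hη₁ hη₂ hF hFh hJF (sub_eq_zero.1 hroot),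
    fun F hF => Gfun_pos_of_lt (hF.2.trans hFh.2) (sub_pos.1 (hpos F hF)),
    fun F hF => Gfun_neg_of_lt (hFh.1.trans hF.1) (sub_neg.1 (hneg F hF))⟩

/-- For `−1/2 < η̂ < 1/2 + σ̂a₁/(a₂ + 1)` there is a unique interior equilibrium `F_h`,
with `G > 0` below it and `G < 0` above it. -/
theorem stmt_9 (σ ξ a₁ a₂ η : ℝ)
    (hσ : 0 < σ) (hξ : 0 < ξ) (ha₁ : 0 < a₁) (ha₂ : 0 < a₂)
    (hη₁ : -(1 / 2) < η) (hη₂ : η < 1 / 2 + σ * a₁ / (a₂ + 1)) :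
    ∃ Fh ∈ Set.Ioo (0 : ℝ) 1,
      Jfun σ ξ a₁ a₂ Fh = Fh + η - 1 / 2 ∧
      (∀ F ∈ Set.Ioo (0 : ℝ) 1, Jfun σ ξ a₁ a₂ F = F + η - 1 / 2 → F = Fh) ∧
      (∀ F ∈ Set.Ico (0 : ℝ) Fh, 0 < Gfun σ ξ a₁ a₂ η F) ∧
      (∀ F ∈ Set.Ioc Fh (1 : ℝ), Gfun σ ξ a₁ a₂ η F < 0) :=
  stmt_9_general σ ξ a₁ a₂ η ha₂ hη₁ hη₂
end

section
/- Assume a₁σ̂ξ > a₂, let D = a₁σ̂·(a₁σ̂ξ − a₂)·(a₂ + ξ + a₂ξ), and set F* = −(√D − a₂ − a₂² + a₁σ̂ξ + a₁a₂σ̂ξ)/(a₂² − a₁a₂σ̂ξ). If a₂(1 − F*) + 1 ≠ 0, then J is differentiable at F* with J'(F*) = 1. -/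
/-!
By the quotient rule `J'(F) = N(F)/(a₂(1 − F) + 1)²` with `N` quadratic, so `J'(F) = 1` is a
quadratic equation in `F`. Multiplied by `a₂(a₁σ̂ξ − a₂) ≠ 0` it becomes `(B − Q·F)² = D` with
`Q = a₂² − a₁a₂σ̂ξ` and `B = a₂ + a₂² − a₁σ̂ξ − a₁a₂σ̂ξ`, and `F*` is the root with `B − Q·F* = √D`.
-/

theorem hasDerivAt_Jfun {σ ξ a₁ a₂ F : ℝ} (hden : a₂ * (1 - F) + 1 ≠ 0) :
    HasDerivAt (Jfun σ ξ a₁ a₂)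
      (σ * a₁ * ((ξ - 1 - 2 * ξ * F) * (a₂ * (1 - F) + 1) + a₂ * (1 + ξ * F) * (1 - F)) /
        (a₂ * (1 - F) + 1) ^ 2) F := by
  have hlin : ∀ c d : ℝ, HasDerivAt (fun x : ℝ => c * (1 - x) + d) (-c) F := fun c d => by
    simpa using (((hasDerivAt_id F).const_sub 1).const_mul c).add_const d
  have hσξ : HasDerivAt (fun x : ℝ => σ * (1 + ξ * x)) (σ * ξ) F := by
    simpa using (((hasDerivAt_id F).const_mul ξ).const_add 1).const_mul σ
  have hquot := (hσξ.fun_mul (hlin a₁ 0)).fun_div (hlin a₂ 1) hden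
  simp only [add_zero] at hquot
  exact hquot.congr_deriv (by ring)

theorem Jfun_tangency_identity (σ ξ a₁ a₂ F : ℝ) :
    a₂ * (a₁ * σ * ξ - a₂) *
        (σ * a₁ * ((ξ - 1 - 2 * ξ * F) * (a₂ * (1 - F) + 1) + a₂ * (1 + ξ * F) * (1 - F)) -
          (a₂ * (1 - F) + 1) ^ 2) =
      (a₂ + a₂ ^ 2 - a₁ * σ * ξ - a₁ * a₂ * σ * ξ - F * (a₂ ^ 2 - a₁ * a₂ * σ * ξ)) ^ 2 -
        a₁ * σ * (a₁ * σ * ξ - a₂) * (a₂ + ξ + a₂ * ξ) := by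
  ring

/-- At the saddle-node point `F*`, the curve `J` is tangent to the line, i.e.
`J'(F*) = 1`. -/
theorem stmt_12 (σ ξ a₁ a₂ : ℝ)
    (hσ : 0 < σ) (hξ : 0 < ξ) (ha₁ : 0 < a₁) (ha₂ : 0 < a₂)
    (hgt : a₂ < a₁ * σ * ξ)
    (D Fstar : ℝ)
    (hD : D = a₁ * σ * (a₁ * σ * ξ - a₂) * (a₂ + ξ + a₂ * ξ))
    (hF : Fstar = -((Real.sqrt D - a₂ - a₂ ^ 2 + a₁ * σ * ξ + a₁ * a₂ * σ * ξ) /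
      (a₂ ^ 2 - a₁ * a₂ * σ * ξ)))
    (hden : a₂ * (1 - Fstar) + 1 ≠ 0) :
    HasDerivAt (Jfun σ ξ a₁ a₂) 1 Fstar := by
  have hgap : 0 < a₁ * σ * ξ - a₂ := sub_pos.2 hgt
  have hD₀ : 0 ≤ D := by rw [hD]; positivity
  have hQ : a₂ ^ 2 - a₁ * a₂ * σ * ξ ≠ 0 := by nlinarith
  have hroot : a₂ + a₂ ^ 2 - a₁ * σ * ξ - a₁ * a₂ * σ * ξ -
      Fstar * (a₂ ^ 2 - a₁ * a₂ * σ * ξ) = Real.sqrt D := by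
    rw [hF, neg_mul, div_mul_cancel₀ _ hQ]; ring
  have htangent := Jfun_tangency_identity σ ξ a₁ a₂ Fstar
  rw [hroot, Real.sq_sqrt hD₀, ← hD, sub_self, mul_eq_zero, sub_eq_zero] at htangent
  refine (hasDerivAt_Jfun hden).congr_deriv ?_
  rw [div_eq_one_iff_eq (pow_ne_zero 2 hden)]
  exact htangent.resolve_left (by positivity)
end

section
/- Assume a₁σ̂ξ > a₂ and B̂² − 4a₂²Ĉ > 0, where B̂ = 2a₂(a₂ − a₁σ̂(ξ − 1) + 1) − 4(a₂ + 1)(a₂ − a₁σ̂ξ) and Ĉ = (a₂ − a₁σ̂(ξ − 1) + 1)² − 4a₁σ̂(a₂ − a₁σ̂ξ). Define Δ(η̂) = a₂²(1/2 − η̂)² + B̂(1/2 − η̂) + Ĉ and η̂₃ = 1/2 + (B̂ − √(B̂² − 4a₂²Ĉ))/(2a₂²). Then Δ(η̂) > 0 for all η̂ < η̂₃, and the function F_u(η̂) = (3a₂ − 2a₂η̂ + 2a₁σ̂ + 2√(Δ(η̂)) − 2a₁σ̂ξ + 2)/(4(a₂ − a₁σ̂ξ)) is strictly increasing on (−∞,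 η̂₃). -/
/-- `Δ` is positive to the left of its smaller root `η̂₃`, and the smaller interior
equilibrium `F_u(η̂)` is strictly increasing on `(−∞, η̂₃)`. -/
theorem stmt_13 (σ ξ a₁ a₂ : ℝ)
    (hσ : 0 < σ) (hξ : 0 < ξ) (ha₁ : 0 < a₁) (ha₂ : 0 < a₂)
    (hgt : a₂ < a₁ * σ * ξ)
    (B C : ℝ)
    (hB : B = 2 * a₂ * (a₂ - a₁ * σ * (ξ - 1) + 1) - 4 * (a₂ + 1) * (a₂ - a₁ * σ * ξ))
    (hC : C = (a₂ - a₁ * σ * (ξ - 1) + 1) ^ 2 - 4 * a₁ * σ * (a₂ - a₁ * σ * ξ))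
    (hdisc : 0 < B ^ 2 - 4 * a₂ ^ 2 * C)
    (Δ : ℝ → ℝ) (hΔ : ∀ η, Δ η = a₂ ^ 2 * (1 / 2 - η) ^ 2 + B * (1 / 2 - η) + C)
    (η₃ : ℝ) (hη₃ : η₃ = 1 / 2 + (B - Real.sqrt (B ^ 2 - 4 * a₂ ^ 2 * C)) / (2 * a₂ ^ 2)) :
    (∀ η < η₃, 0 < Δ η) ∧
    StrictMonoOn
      (fun η : ℝ => (3 * a₂ - 2 * a₂ * η + 2 * a₁ * σ + 2 * Real.sqrt (Δ η)
        - 2 * a₁ * σ * ξ + 2) / (4 * (a₂ - a₁ * σ * ξ)))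
      (Set.Iio η₃) := by
  have ha₂2 : (0:ℝ) < 2 * a₂ ^ 2 := by positivity
  set d := Real.sqrt (B ^ 2 - 4 * a₂ ^ 2 * C) with hd
  have hd2 : d ^ 2 = B ^ 2 - 4 * a₂ ^ 2 * C := Real.sq_sqrt hdisc.le
  have hdpos : 0 < d := Real.sqrt_pos.mpr hdisc
  -- key slope fact
  have hs : ∀ η < η₃, d < 2 * a₂ ^ 2 * (1 / 2 - η) + B := by
    intro η hη
    rw [hη₃] at hη
    have h2 : η - 1 / 2 < (B - d) / (2 * a₂ ^ 2) := by linarith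
    have h3 : (η - 1 / 2) * (2 * a₂ ^ 2) < B - d := (lt_div_iff₀ ha₂2).mp h2
    nlinarith [h3]
  have hΔpos : ∀ η < η₃, 0 < Δ η := by
    intro η hη
    have h := hs η hη
    have hsq : d ^ 2 < (2 * a₂ ^ 2 * (1 / 2 - η) + B) ^ 2 := by nlinarith
    rw [hΔ η]
    nlinarith [hsq, hd2, sq_nonneg a₂]
  refine ⟨hΔpos, ?_⟩
  intro η₁ h₁ η₂ h₂ h₁₂
  simp only [Set.mem_Iio] at h₁ h₂
  have hden : 4 * (a₂ - a₁ * σ * ξ) < 0 := by linarith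
  have hs₁ := hs η₁ h₁
  have hs₂ := hs η₂ h₂
  have hΔ₁ := hΔpos η₁ h₁
  have hΔ₂ := hΔpos η₂ h₂
  have hlt : Δ η₂ < Δ η₁ := by
    rw [hΔ η₁, hΔ η₂]
    nlinarith [hs₁, hs₂, hdpos, h₁₂]
  have hsqrt : Real.sqrt (Δ η₂) < Real.sqrt (Δ η₁) := Real.sqrt_lt_sqrt hΔ₂.le hlt
  have hnum : (3 * a₂ - 2 * a₂ * η₂ + 2 * a₁ * σ + 2 * Real.sqrt (Δ η₂)
      - 2 * a₁ * σ * ξ + 2) < (3 * a₂ - 2 * a₂ * η₁ + 2 * a₁ * σ + 2 * Real.sqrt (Δ η₁)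
      - 2 * a₁ * σ * ξ + 2) := by linarith [mul_lt_mul_of_pos_left h₁₂ ha₂, hsqrt]
  exact div_lt_div_of_neg_of_lt hden hnum
end

section
/- Assume a₁σ̂ξ > a₂ and B̂² − 4a₂²Ĉ > 0, where B̂ = 2a₂(a₂ − a₁σ̂(ξ − 1) + 1) − 4(a₂ + 1)(a₂ − a₁σ̂ξ) and Ĉ = (a₂ − a₁σ̂(ξ − 1) + 1)² − 4a₁σ̂(a₂ − a₁σ̂ξ). Define Δ(η̂) = a₂²(1/2 − η̂)² + B̂(1/2 − η̂) + Ĉ and η̂₃ = 1/2 + (B̂ − √(B̂² − 4a₂²Ĉ))/(2a₂²). Then the function F_h(η̂) = (3a₂ − 2a₂η̂ + 2a₁σ̂ − 2√(Δ(η̂)) − 2a₁σ̂ξ + 2)/(4(a₂ − a₁σ̂ξ)) is strictly decreasing on (−∞, η̂₃), and F_h(η̂) > F_u(η̂) for all η̂ < η̂₃, where F_u(η̂) = (3a₂ − 2a₂η̂ + 2a₁σ̂ + 2√(Δ(η̂)) − 2a₁σ̂ξ + 2)/(4(a₂ − a₁σ̂ξ)). -/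
/-- The larger interior equilibrium `F_h(η̂)` is strictly decreasing on `(−∞, η̂₃)` and
exceeds the smaller one `F_u(η̂)` there. -/
theorem stmt_14 (σ ξ a₁ a₂ : ℝ)
    (hσ : 0 < σ) (hξ : 0 < ξ) (ha₁ : 0 < a₁) (ha₂ : 0 < a₂)
    (hgt : a₂ < a₁ * σ * ξ)
    (B C : ℝ)
    (hB : B = 2 * a₂ * (a₂ - a₁ * σ * (ξ - 1) + 1) - 4 * (a₂ + 1) * (a₂ - a₁ * σ * ξ))
    (hC : C = (a₂ - a₁ * σ * (ξ - 1) + 1) ^ 2 - 4 * a₁ * σ * (a₂ - a₁ * σ * ξ))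
    (hdisc : 0 < B ^ 2 - 4 * a₂ ^ 2 * C)
    (Δ : ℝ → ℝ) (hΔ : ∀ η, Δ η = a₂ ^ 2 * (1 / 2 - η) ^ 2 + B * (1 / 2 - η) + C)
    (η₃ : ℝ) (hη₃ : η₃ = 1 / 2 + (B - Real.sqrt (B ^ 2 - 4 * a₂ ^ 2 * C)) / (2 * a₂ ^ 2))
    (Fh Fu : ℝ → ℝ)
    (hFh : ∀ η, Fh η = (3 * a₂ - 2 * a₂ * η + 2 * a₁ * σ - 2 * Real.sqrt (Δ η)
      - 2 * a₁ * σ * ξ + 2) / (4 * (a₂ - a₁ * σ * ξ)))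
    (hFu : ∀ η, Fu η = (3 * a₂ - 2 * a₂ * η + 2 * a₁ * σ + 2 * Real.sqrt (Δ η)
      - 2 * a₁ * σ * ξ + 2) / (4 * (a₂ - a₁ * σ * ξ))) :
    StrictAntiOn Fh (Set.Iio η₃) ∧ (∀ η < η₃, Fu η < Fh η) := by
  set s := Real.sqrt (B ^ 2 - 4 * a₂ ^ 2 * C) with hs
  have hs0 : 0 < s := Real.sqrt_pos.mpr hdisc
  have hs2 : s ^ 2 = B ^ 2 - 4 * a₂ ^ 2 * C := Real.sq_sqrt hdisc.le
  have ha2sq : (0:ℝ) < a₂ ^ 2 := by positivity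
  -- Key claim
  have key : ∀ η < η₃, 0 < Δ η ∧
      2 * a₂ * Real.sqrt (Δ η) < 2 * a₂ ^ 2 * (1 / 2 - η) + B := by
    intro η hη
    have hx : η < 1 / 2 + (B - s) / (2 * a₂ ^ 2) := by rw [hη₃] at hη; exact hη
    have ht : s < 2 * a₂ ^ 2 * (1 / 2 - η) + B := by
      have h2 : (s - B) / (2 * a₂ ^ 2) < 1 / 2 - η := by
        have heq : (s - B) / (2 * a₂ ^ 2) = -((B - s) / (2 * a₂ ^ 2)) := by ring
        rw [heq]; linarith
      have h3 : s - B < (1 / 2 - η) * (2 * a₂ ^ 2) := by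
        rwa [div_lt_iff₀ (by positivity)] at h2
      nlinarith [h3]
    set t := 2 * a₂ ^ 2 * (1 / 2 - η) + B with htdef
    have hid : 4 * a₂ ^ 2 * Δ η = t ^ 2 - s ^ 2 := by
      rw [hΔ, htdef]; linear_combination hs2
    have hΔpos : 0 < Δ η := by nlinarith
    have hsq : Real.sqrt (Δ η) ^ 2 = Δ η := Real.sq_sqrt hΔpos.le
    have hnn : 0 ≤ Real.sqrt (Δ η) := Real.sqrt_nonneg _
    refine ⟨hΔpos, ?_⟩
    nlinarith [sq_nonneg (t - 2 * a₂ * Real.sqrt (Δ η)), hs0, ht, hid, hsq]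
  have hd : 4 * (a₂ - a₁ * σ * ξ) < 0 := by nlinarith
  constructor
  · intro η₁ h₁ η₂ h₂ h₁₂
    simp only [Set.mem_Iio] at h₁ h₂
    obtain ⟨hp1, hk1⟩ := key η₁ h₁
    obtain ⟨hp2, hk2⟩ := key η₂ h₂
    have hsq1 : Real.sqrt (Δ η₁) ^ 2 = Δ η₁ := Real.sq_sqrt hp1.le
    have hsq2 : Real.sqrt (Δ η₂) ^ 2 = Δ η₂ := Real.sq_sqrt hp2.le
    have hnn2 : 0 ≤ Real.sqrt (Δ η₂) := Real.sqrt_nonneg _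
    have he : 0 < η₂ - η₁ := by linarith
    -- identity: Δ η₁ = Δ η₂ + (η₂-η₁)*t₂ + a₂²(η₂-η₁)²
    have hident : Δ η₁ = Δ η₂ + (η₂ - η₁) * (2 * a₂ ^ 2 * (1 / 2 - η₂) + B)
        + a₂ ^ 2 * (η₂ - η₁) ^ 2 := by
      rw [hΔ, hΔ]; ring
    have hstep : Real.sqrt (Δ η₂) + a₂ * (η₂ - η₁) < Real.sqrt (Δ η₁) := by
      rw [← Real.sqrt_sq (x := Real.sqrt (Δ η₂) + a₂ * (η₂ - η₁)) (by positivity)]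
      apply Real.sqrt_lt_sqrt (by positivity)
      have hm : (η₂ - η₁) * (2 * a₂ * Real.sqrt (Δ η₂)) <
          (η₂ - η₁) * (2 * a₂ ^ 2 * (1 / 2 - η₂) + B) :=
        mul_lt_mul_of_pos_left hk2 he
      have hexp : (Real.sqrt (Δ η₂) + a₂ * (η₂ - η₁)) ^ 2
          = Δ η₂ + (η₂ - η₁) * (2 * a₂ * Real.sqrt (Δ η₂)) + a₂ ^ 2 * (η₂ - η₁) ^ 2 := by
        linear_combination hsq2
      linarith [hm, hident, hexp]
    rw [hFh, hFh]
    apply div_lt_div_of_neg_of_lt hd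
    linarith
  · intro η hη
    obtain ⟨hp, -⟩ := key η hη
    have hsp : 0 < Real.sqrt (Δ η) := Real.sqrt_pos.mpr hp
    rw [hFh, hFu]
    apply div_lt_div_of_neg_of_lt hd
    linarith
end

section
/- Let w > 0 and define v̂(w) = ω·w/(ω·w + β₂·(μ + w)). If (1 − 1/(γ·v̂(w)))·ĥ(0) > β₂, then there exists a unique u > 0 satisfying (1 − 1/(γ·v̂(w)))·ĥ(u) = β₂; consequently (u, v̂(w)) is the unique solution with u > 0 of the system (1 − 1/(γv))·ĥ(u) = β₂, ω(1 − v)·w/(μ + w) = (v − 1/γ)·ĥ(u). -/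
open Real Set Filter Topology

noncomputable def lightLog (I x : ℝ) : ℝ := log ((1 + I) / (1 + I * exp (-x)))

section
variable {I : ℝ}

lemma lightLog_zero : lightLog I 0 = 0 := by
  simp [lightLog]

lemma hasDerivAt_lightLog (hI : 0 < I) (x : ℝ) :
    HasDerivAt (lightLog I) (I / (exp x + I)) x := by
  have hden : 0 < 1 + I * exp (-x) := by positivity
  have hsplit : lightLog I =ᶠ[𝓝 x] fun y => log (1 + I) - log (1 + I * exp (-y)) :=
    Eventually.of_forall fun y => log_div (by positivity) (by positivity)
  have hinner : HasDerivAt (fun y => 1 + I * exp (-y)) (-(I * exp (-x))) x := by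
    simpa using (((hasDerivAt_neg x).exp).const_mul I).const_add 1
  refine (((hinner.log hden.ne').const_sub _).congr_of_eventuallyEq hsplit).congr_deriv ?_
  rw [exp_neg]
  field_simp

lemma strictConcaveOn_lightLog (hI : 0 < I) : StrictConcaveOn ℝ univ (lightLog I) := by
  refine StrictAnti.strictConcaveOn_univ_of_deriv
    (continuous_iff_continuousAt.2 fun x => (hasDerivAt_lightLog hI x).continuousAt) ?_
  intro x y hxy
  simp only [(hasDerivAt_lightLog hI _).deriv]
  gcongr

lemma hhat_eq_slope (k₁ u : ℝ) :
    hhat k₁ I u = (lightLog I (u + k₁) - lightLog I 0) / (u + k₁ - 0) := by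
  rw [lightLog_zero, sub_zero, sub_zero, hhat, lightLog, one_div_mul_eq_div]

lemma hhat_strictAntiOn (hI : 0 < I) (k₁ : ℝ) : StrictAntiOn (hhat k₁ I) (Ioi (-k₁)) := by
  intro u hu v hv huv
  simp only [hhat_eq_slope]
  have hu' : u + k₁ ≠ 0 := by rw [mem_Ioi] at hu; linarith
  have hv' : v + k₁ ≠ 0 := by rw [mem_Ioi] at hv; linarith
  exact (strictConcaveOn_lightLog hI).secant_strict_mono (mem_univ 0) (mem_univ _) (mem_univ _)
    hu' hv' (by linarith)

lemma continuousAt_hhat (hI : 0 < I) {k₁ u : ℝ} (hu : u + k₁ ≠ 0) :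
    ContinuousAt (hhat k₁ I) u := by
  unfold hhat
  fun_prop (disch := positivity)

lemma tendsto_hhat_atTop (hI : 0 < I) (k₁ : ℝ) : Tendsto (hhat k₁ I) atTop (𝓝 0) := by
  have hshift : Tendsto (fun u : ℝ => u + k₁) atTop atTop :=
    tendsto_atTop_add_const_right _ _ tendsto_id
  have hexp : Tendsto (fun u : ℝ => exp (-(u + k₁))) atTop (𝓝 0) :=
    tendsto_exp_neg_atTop_nhds_zero.comp hshift
  have hlog : Tendsto (fun u : ℝ => log ((1 + I) / (1 + I * exp (-(u + k₁))))) atTop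
      (𝓝 (log (1 + I))) := by
    have harg := (tendsto_const_nhds (x := 1 + I)).div ((hexp.const_mul I).const_add 1)
      (by simp)
    simp only [mul_zero, add_zero, div_one] at harg
    exact ((continuousAt_log (by positivity)).tendsto).comp harg
  have := hshift.inv_tendsto_atTop.mul hlog
  rw [zero_mul] at this
  exact this.congr fun u => by simp only [hhat, Pi.inv_apply, one_div]
end

theorem existsUnique_eq_of_tendsto_atTop {F : ℝ → ℝ} {a b l : ℝ}
    (hcont : ContinuousOn F (Ici a)) (hinj : InjOn F (Ioi a))
    (hlim : Tendsto F atTop (𝓝 l)) (hlb : l < b) (hb : b < F a) :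
    ∃! u, a < u ∧ F u = b := by
  obtain ⟨U, hFU, haU⟩ := ((hlim.eventually (gt_mem_nhds hlb)).and (eventually_gt_atTop a)).exists
  obtain ⟨u, hu, hFu⟩ :=
    intermediate_value_Ioo' haU.le (hcont.mono Icc_subset_Ici_self) ⟨hFU, hb⟩
  exact ⟨u, ⟨hu.1, hFu⟩, fun v hv => hinj hv.1 hu.1 (hv.2.trans hFu.symm)⟩

theorem iron_balance_iff {ω β₂ μ γ w v h : ℝ} (hω : 0 < ω) (hβ₂ : 0 < β₂) (hμ : 0 < μ)
    (hγ : 0 < γ) (hw : 0 < w) (hgrowth : (1 - 1 / (γ * v)) * h = β₂) :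
    ω * (1 - v) * w / (μ + w) = (v - 1 / γ) * h ↔ v = ω * w / (ω * w + β₂ * (μ + w)) := by
  have hμw : 0 < μ + w := by positivity
  rcases eq_or_ne v 0 with rfl | hv
  · simp only [mul_zero, div_zero, sub_zero, one_mul] at hgrowth
    have hlhs : 0 < ω * (1 - 0) * w / (μ + w) := by rw [sub_zero, mul_one]; positivity
    have hrhs : (0 - 1 / γ) * h < 0 := by
      rw [hgrowth, zero_sub, neg_mul, neg_neg_iff_pos]; positivity
    exact iff_of_false (fun heq => hrhs.not_gt (heq ▸ hlhs)) fun heq =>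
      (by positivity : 0 < ω * w / (ω * w + β₂ * (μ + w))).ne heq
  have hgrowth' : (v - 1 / γ) * h = v * β₂ := by
    rw [← hgrowth]; field_simp
  rw [hgrowth', div_eq_iff hμw.ne', eq_div_iff (by positivity)]
  constructor <;> intro heq <;> linear_combination -heq

/-- Existence and uniqueness of the positive-biomass solution of the iron fast
subsystem when `(1 − 1/(γ·v̂(w)))·ĥ(0) > β₂`. -/
theorem stmt_17 (k₁ I ω β₂ μ γ : ℝ)
    (hk₁ : 0 < k₁) (hI : 0 < I) (hω : 0 < ω) (hβ₂ : 0 < β₂) (hμ : 0 < μ) (hγ : 1 < γ)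
    (w : ℝ) (hw : 0 < w)
    (vhat : ℝ) (hvhat : vhat = ω * w / (ω * w + β₂ * (μ + w)))
    (hcond : (1 - 1 / (γ * vhat)) * hhat k₁ I 0 > β₂) :
    (∃! u : ℝ, 0 < u ∧ (1 - 1 / (γ * vhat)) * hhat k₁ I u = β₂) ∧
    (∃! uv : ℝ × ℝ, 0 < uv.1 ∧
      (1 - 1 / (γ * uv.2)) * hhat k₁ I uv.1 = β₂ ∧
      ω * (1 - uv.2) * w / (μ + w) = (uv.2 - 1 / γ) * hhat k₁ I uv.1) ∧
    (∀ uv : ℝ × ℝ, 0 < uv.1 →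
      (1 - 1 / (γ * uv.2)) * hhat k₁ I uv.1 = β₂ →
      ω * (1 - uv.2) * w / (μ + w) = (uv.2 - 1 / γ) * hhat k₁ I uv.1 →
      uv.2 = vhat) := by
  set c := 1 - 1 / (γ * vhat)
  have hc : c ≠ 0 := by rintro hc; rw [hc, zero_mul] at hcond; exact hβ₂.not_gt hcond
  have hγ₀ : 0 < γ := by linarith
  have hunique : ∃! u : ℝ, 0 < u ∧ c * hhat k₁ I u = β₂ := by
    refine existsUnique_eq_of_tendsto_atTop (l := 0) ?_ ?_ ?_ hβ₂ hcond
    · exact fun u hu => (continuousAt_const.mul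
        (continuousAt_hhat hI (by rw [mem_Ici] at hu; linarith))).continuousWithinAt
    · exact fun u hu v hv huv => (hhat_strictAntiOn hI k₁).injOn
        (Ioi_subset_Ioi (by linarith) hu) (Ioi_subset_Ioi (by linarith) hv)
        (mul_left_cancel₀ hc huv)
    · simpa using (tendsto_hhat_atTop hI k₁).const_mul c
  obtain ⟨u₀, ⟨hu₀, hgrowth₀⟩, hu₀_unique⟩ := hunique
  have hv_eq : ∀ u v : ℝ, (1 - 1 / (γ * v)) * hhat k₁ I u = β₂ →
      ω * (1 - v) * w / (μ + w) = (v - 1 / γ) * hhat k₁ I u → v = vhat :=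
    fun _ _ hgrowth hiron => hvhat ▸ (iron_balance_iff hω hβ₂ hμ hγ₀ hw hgrowth).1 hiron
  refine ⟨⟨u₀, ⟨hu₀, hgrowth₀⟩, hu₀_unique⟩, ⟨(u₀, vhat), ⟨hu₀, hgrowth₀,
    (iron_balance_iff hω hβ₂ hμ hγ₀ hw hgrowth₀).2 hvhat⟩, ?_⟩, fun uv _ => hv_eq uv.1 uv.2⟩
  rintro ⟨u, v⟩ ⟨hu, hgrowth, hiron⟩
  obtain rfl : v = vhat := hv_eq u v hgrowth hiron
  rw [hu₀_unique u ⟨hu, hgrowth⟩]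
end
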